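/- Let G be a nonsplit central extension of a finite simple group S by C_p (p prime). Then the kernel C_p is the unique minimal normal subgroup of G, and μ(G) ≥ p·μ(S). -/
import Mathlib

/-- The minimal faithful permutation degree of a group `G`: the least `n`
such that `G` embeds into `Sym(n)`. -/
noncomputable def minFaithfulDegree (G : Type*) [Group G] : ℕ :=
  sInf {n : ℕ | ∃ f : G →* Equiv.Perm (Fin n), Function.Injective f}

lemma minFaithfulDegree_le_card {G X : Type*} [Group G] [Finite X]
    (f : G →* Equiv.Perm X) (hf : Function.Injective f) :
    minFaithfulDegree G ≤ Nat.card X :=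
  Nat.sInf_le ⟨(Equiv.Perm.viaEmbeddingHom (Finite.equivFin X).toEmbedding).comp f,
    (Equiv.Perm.viaEmbeddingHom_injective _).comp hf⟩

/-- If `G` is a nonsplit central extension of a finite simple group `S` by `C_p`
(`p` prime), then the kernel is the unique minimal normal subgroup of `G` and
`μ(G) ≥ p · μ(S)`. -/
theorem mu_nonsplit_central_extension (G : Type*) [Group G] [Finite G]
    (p : ℕ) (hp : p.Prime) (K : Subgroup G) [K.Normal]
    (hKc : K ≤ Subgroup.center G) (hK : Nat.card K = p)
    (hS : IsSimpleGroup (G ⧸ K))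
    (hnonsplit : ¬∃ H : Subgroup G, K.IsComplement' H) :
    (∀ N : Subgroup G, N.Normal → N ≠ ⊥ → K ≤ N) ∧
      p * minFaithfulDegree (G ⧸ K) ≤ minFaithfulDegree G := by
  have hp1 : 1 < p := hp.one_lt
  have hKbot : K ≠ ⊥ := by
    intro h
    rw [h, Subgroup.card_bot] at hK
    omega
  have hprime : ∀ N : Subgroup G, N ≤ K → N ≠ ⊥ → K ≤ N := by
    intro N hle hbot
    have hd : Nat.card N ∣ p := hK ▸ Subgroup.card_dvd_of_le hle
    rcases hp.eq_one_or_self_of_dvd _ hd with h1 | h1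
    · exact absurd (Subgroup.card_eq_one.mp h1) hbot
    · exact (Subgroup.eq_of_le_of_card_ge hle (by rw [hK, h1])).ge
  have hcompl : ∀ N : Subgroup G, K ⊓ N = ⊥ → K ⊔ N = ⊤ → False := by
    intro N hinf hsup
    exact hnonsplit ⟨N, Subgroup.isComplement'_of_disjoint_and_mul_eq_univ
      (disjoint_iff.mpr hinf)
      (by rw [← Subgroup.normal_mul, hsup, Subgroup.coe_top])⟩
  have hmin : ∀ N : Subgroup G, N.Normal → N ≠ ⊥ → K ≤ N := by
    intro N hN hbot
    rcases hS.eq_bot_or_eq_top_of_normal (N.map (QuotientGroup.mk' K))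
      (Subgroup.Normal.map hN _ (QuotientGroup.mk'_surjective K)) with h | h
    · have hle : N ≤ K := by
        have := (Subgroup.map_eq_bot_iff N).mp h
        rwa [QuotientGroup.ker_mk'] at this
      exact hprime N hle hbot
    · have hsup : N ⊔ K = ⊤ := by
        have h2 := Subgroup.comap_map_eq (QuotientGroup.mk' K) N
        rw [h, Subgroup.comap_top, QuotientGroup.ker_mk'] at h2
        exact h2.symm
      by_cases hinf : K ⊓ N = ⊥
      · exact absurd (hcompl N hinf (by rw [sup_comm] at hsup; exact hsup)) (fun h => h)
      · exact le_trans (hprime (K ⊓ N) inf_le_left hinf) inf_le_right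
  refine ⟨hmin, ?_⟩
  -- find a faithful representation realizing the minimum
  have hGne : {n : ℕ | ∃ f : G →* Equiv.Perm (Fin n), Function.Injective f}.Nonempty := by
    refine ⟨Nat.card G,
      (Equiv.Perm.viaEmbeddingHom (Finite.equivFin G).toEmbedding).comp
        (MulAction.toPermHom G G), ?_⟩
    refine (Equiv.Perm.viaEmbeddingHom_injective _).comp ?_
    intro a b hab
    have := congrArg (fun e : Equiv.Perm G => e 1) hab
    simpa using this
  set n := minFaithfulDegree G with hn
  obtain ⟨f, hf⟩ : ∃ f : G →* Equiv.Perm (Fin n), Function.Injective f := Nat.sInf_mem hGne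
  obtain ⟨⟨k, hkK⟩, hk1⟩ := Subgroup.ne_bot_iff_exists_ne_one.mp hKbot
  have hk1' : k ≠ 1 := by simpa [Subtype.ext_iff] using hk1
  have hfk : f k ≠ 1 := fun h => hk1' (hf (by rw [h, map_one]))
  obtain ⟨x, hx⟩ : ∃ x, f k x ≠ x := by
    by_contra h
    push_neg at h
    exact hfk (Equiv.ext fun y => (h y).trans rfl)
  letI : MulAction G (Fin n) := MulAction.compHom _ f
  have hsmul : ∀ (g : G) (y : Fin n), g • y = f g y := fun g y => rfl
  set H : Subgroup G := MulAction.stabilizer G x with hH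
  have hkH : k ∉ H := by
    intro hmem
    exact hx ((hsmul k x).symm.trans hmem)
  have hcore : H.normalCore = ⊥ := by
    by_contra hc
    exact hkH (H.normalCore_le ((hmin _ H.normalCore_normal hc) hkK))
  have hKH : K ⊓ H = ⊥ := by
    by_contra hne
    exact hkH (((hprime _ inf_le_left hne).trans inf_le_right) hkK)
  set T : Subgroup (G ⧸ K) := H.map (QuotientGroup.mk' K) with hT
  have hTtop : T ≠ ⊤ := by
    intro h
    have h2 := Subgroup.comap_map_eq (QuotientGroup.mk' K) H
    rw [← hT, h, Subgroup.comap_top, QuotientGroup.ker_mk'] at h2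
    exact hcompl H hKH (by rw [sup_comm] at h2; exact h2.symm)
  have hcardT : Nat.card T = Nat.card H := by
    have hinjOn : Set.InjOn (QuotientGroup.mk' K) (H : Set G) := by
      intro a ha b hb hab
      have hmem : a⁻¹ * b ∈ K := QuotientGroup.eq.mp hab
      have hmemH : a⁻¹ * b ∈ H := H.mul_mem (H.inv_mem ha) hb
      have hb2 : a⁻¹ * b ∈ K ⊓ H := ⟨hmem, hmemH⟩
      rw [hKH, Subgroup.mem_bot] at hb2
      exact inv_mul_eq_one.mp hb2
    have h1 : (T : Set (G ⧸ K)) = (QuotientGroup.mk' K) '' (H : Set G) :=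
      Subgroup.coe_map _ _
    rw [← SetLike.coe_sort_coe, h1, Nat.card_image_of_injOn hinjOn, SetLike.coe_sort_coe]
  haveI : Finite (G ⧸ K) := Quotient.finite _
  have hcoreT : T.normalCore = ⊥ := by
    rcases hS.eq_bot_or_eq_top_of_normal T.normalCore T.normalCore_normal with h | h
    · exact h
    · exact absurd (top_le_iff.mp (h ▸ T.normalCore_le)) hTtop
  have hmuS : minFaithfulDegree (G ⧸ K) ≤ Nat.card ((G ⧸ K) ⧸ T) := by
    refine minFaithfulDegree_le_card (MulAction.toPermHom (G ⧸ K) ((G ⧸ K) ⧸ T)) ?_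
    rw [← MonoidHom.ker_eq_bot_iff, ← Subgroup.normalCore_eq_ker]
    exact hcoreT
  have hcard1 : Nat.card G = Nat.card (G ⧸ H) * Nat.card H :=
    Subgroup.card_eq_card_quotient_mul_card_subgroup H
  have hcard2 : Nat.card G = Nat.card (G ⧸ K) * p := by
    rw [← hK]; exact Subgroup.card_eq_card_quotient_mul_card_subgroup K
  have hcard3 : Nat.card (G ⧸ K) = Nat.card ((G ⧸ K) ⧸ T) * Nat.card H := by
    rw [← hcardT]; exact Subgroup.card_eq_card_quotient_mul_card_subgroup T
  have hHpos : 0 < Nat.card H := Nat.card_pos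
  have key : Nat.card (G ⧸ H) = p * Nat.card ((G ⧸ K) ⧸ T) := by
    have heq : Nat.card (G ⧸ H) * Nat.card H
        = (p * Nat.card ((G ⧸ K) ⧸ T)) * Nat.card H := by
      rw [← hcard1, hcard2, hcard3]; ring
    exact Nat.eq_of_mul_eq_mul_right hHpos heq
  have hnbound : Nat.card (G ⧸ H) ≤ n := by
    have horb : Nat.card (G ⧸ H) = Nat.card (MulAction.orbit G x) :=
      (Nat.card_congr (MulAction.orbitEquivQuotientStabilizer G x)).symm
    rw [horb]
    calc Nat.card (MulAction.orbit G x)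
        ≤ Nat.card (Fin n) := Nat.card_le_card_of_injective _ Subtype.val_injective
      _ = n := by simp
  calc p * minFaithfulDegree (G ⧸ K)
      ≤ p * Nat.card ((G ⧸ K) ⧸ T) := Nat.mul_le_mul_left p hmuS
    _ = Nat.card (G ⧸ H) := key.symm
    _ ≤ n := hnbound
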